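/- Let Q^{(n,N)} be the n × N 0-1 matrix with N ≥ ⌊5n/2⌋ − 1 defined by: Q_{i,j}=1 iff (i ≤ ⌈n/2⌉ and i+j ≤ ⌈n/2⌉+1) or (i ≤ ⌈n/2⌉ and i+j > ⌈n/2⌉ + ⌊(⌈n/2⌉+N−1)/2⌋ + 1) or (i > ⌈n/2⌉ and ⌈n/2⌉ + N − ⌊(⌈n/2⌉+N−1)/2⌋ < i+j ≤ ⌈n/2⌉ + N). Then every homogeneous staircase in Q^{(n,N)} has length at most ⌈(⌈n/2⌉+N−1)/2⌉. -/

import Mathlib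

/-!
Every step of a staircase strictly increases the antidiagonal index `d = i + j` (0-based).
Write `m = ⌈n/2⌉`, `K = ⌊(m+N-1)/2⌋` and `B = ⌈(m+N-1)/2⌉`, so `K + B = m + N - 1`.
The ones of `Q` lie on the antidiagonals `d < m` and `d ≥ m + K` of the top `m` rows and on
`B ≤ d ≤ m + N - 2` below; the zeros lie on `m ≤ d < m + K` in the top rows and on `d < B` or
`d ≥ m + N - 1` below. Collapsing the gaps between these bands gives, for each value, a rank
with fewer than `B` values that increases along every staircase of that value. The only delicate
steps go down a column from a top band into a bottom band, and `N ≥ ⌊5n/2⌋ - 1` puts the bands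
concerned (the top-left triangle of ones and the lower band of ones; the top zeros and the last
`⌊n/2⌋` antidiagonals of zeros) in disjoint sets of columns.
-/

/-- A step of a staircase: the next position is strictly to the right in the
same row, or strictly below in the same column. -/
def Step {n N : ℕ} (p q : Fin n × Fin N) : Prop :=
  (p.1 = q.1 ∧ p.2 < q.2) ∨ (p.2 = q.2 ∧ p.1 < q.1)

/-- A `v`-staircase in the 0-1 matrix `M`: a sequence of positions all holding
the value `v`, each successive one strictly to the right in the same row or
strictly below in the same column of the previous one. -/
def IsStaircase {n N : ℕ} (M : Fin n → Fin N → Fin 2) (v : Fin 2)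
    (L : List (Fin n × Fin N)) : Prop :=
  (∀ p ∈ L, M p.1 p.2 = v) ∧ L.Chain' Step

/-- The matrix Q^(n,N) (1-based indices i, j): Q_(i,j) = 1 iff
(1) i ≤ ⌈n/2⌉ and i+j ≤ ⌈n/2⌉+1, or
(2) i ≤ ⌈n/2⌉ and i+j > ⌈n/2⌉ + ⌊(⌈n/2⌉+N−1)/2⌋ + 1, or
(3) i > ⌈n/2⌉ and ⌈n/2⌉ + N − ⌊(⌈n/2⌉+N−1)/2⌋ < i+j ≤ ⌈n/2⌉ + N. -/
def Qmat (n N : ℕ) : Fin n → Fin N → Fin 2 := fun i j =>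
  if (i.1 + 1 ≤ (n + 1) / 2 ∧ (i.1 + 1) + (j.1 + 1) ≤ (n + 1) / 2 + 1) ∨
     (i.1 + 1 ≤ (n + 1) / 2 ∧
       (n + 1) / 2 + ((n + 1) / 2 + N - 1) / 2 + 1 < (i.1 + 1) + (j.1 + 1)) ∨
     ((n + 1) / 2 < i.1 + 1 ∧
       (n + 1) / 2 + N - ((n + 1) / 2 + N - 1) / 2 < (i.1 + 1) + (j.1 + 1) ∧
       (i.1 + 1) + (j.1 + 1) ≤ (n + 1) / 2 + N)
  then 1 else 0

theorem List.IsChain.length_le_of_lt {α : Type*} {R : α → α → Prop} {l : List α}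
    (f : α → ℕ) {B : ℕ} (hl : l.IsChain R) (hf : ∀ a ∈ l, ∀ b ∈ l, R a b → f a < f b)
    (hB : ∀ a ∈ l, f a < B) : l.length ≤ B := by
  have hsorted : (l.map f).SortedLT :=
    List.sortedLT_iff_isChain.2 <| (List.isChain_map f).2 <|
      hl.imp_of_mem_imp fun a b ha hb => hf a ha b hb
  calc l.length = (l.map f).toFinset.card := by
        rw [List.toFinset_card_of_nodup hsorted.nodup, List.length_map]
    _ ≤ (Finset.range B).card := Finset.card_le_card fun x hx => by
        obtain ⟨a, ha, rfl⟩ := List.mem_map.1 (List.mem_toFinset.1 hx)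
        exact Finset.mem_range.2 (hB a ha)
    _ = B := Finset.card_range B

theorem IsStaircase.length_le_of_lt {n N : ℕ} {M : Fin n → Fin N → Fin 2} {v : Fin 2}
    {L : List (Fin n × Fin N)} (hL : IsStaircase M v L) (f : Fin n × Fin N → ℕ) {B : ℕ}
    (hf : ∀ p q, M p.1 p.2 = v → M q.1 q.2 = v → Step p q → f p < f q)
    (hB : ∀ p, M p.1 p.2 = v → f p < B) : L.length ≤ B :=
  hL.2.length_le_of_lt f (fun p hp q hq => hf p q (hL.1 p hp) (hL.1 q hq))
    fun p hp => hB p (hL.1 p hp)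

def oneRank (n N : ℕ) (p : Fin n × Fin N) : ℕ :=
  if p.1.1 + p.2.1 < (n + 1) / 2 then p.1.1 + p.2.1
  else p.1.1 + p.2.1 - ((n + 1) / 2 + N - 1) / 2

def zeroRank (n N : ℕ) (p : Fin n × Fin N) : ℕ :=
  if p.1.1 + p.2.1 + 2 ≤ (n + 1) / 2 + N then p.1.1 + p.2.1 - (n + 1) / 2
  else p.1.1 + p.2.1 + 1 + ((n + 1) / 2 + N - 1 + 1) / 2 - (n + N)

section

variable {n N : ℕ} {p q : Fin n × Fin N}

theorem oneRank_lt_oneRank (hN : 5 * n / 2 - 1 ≤ N) (hp : Qmat n N p.1 p.2 = 1)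
    (hq : Qmat n N q.1 q.2 = 1) (hpq : Step p q) : oneRank n N p < oneRank n N q := by
  simp only [Qmat, Fin.isValue, ite_eq_left_iff, zero_ne_one, imp_false, not_not] at hp hq
  simp only [Step, Fin.ext_iff, Fin.lt_def] at hpq
  have := q.1.isLt
  unfold oneRank
  split_ifs <;> omega

theorem oneRank_lt (hN : 5 * n / 2 - 1 ≤ N) (hp : Qmat n N p.1 p.2 = 1) :
    oneRank n N p < ((n + 1) / 2 + N - 1 + 1) / 2 := by
  simp only [Qmat, Fin.isValue, ite_eq_left_iff, zero_ne_one, imp_false, not_not] at hp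
  have := p.1.isLt; have := p.2.isLt
  unfold oneRank
  split_ifs <;> omega

theorem zeroRank_lt_zeroRank (hN : 5 * n / 2 - 1 ≤ N) (hp : Qmat n N p.1 p.2 = 0)
    (hq : Qmat n N q.1 q.2 = 0) (hpq : Step p q) : zeroRank n N p < zeroRank n N q := by
  simp only [Qmat, Fin.isValue, ite_eq_right_iff, one_ne_zero, imp_false] at hp hq
  simp only [Step, Fin.ext_iff, Fin.lt_def] at hpq
  have := p.1.isLt; have := q.1.isLt; have := p.2.isLt; have := q.2.isLt
  unfold zeroRank
  split_ifs <;> omega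

theorem zeroRank_lt (hp : Qmat n N p.1 p.2 = 0) :
    zeroRank n N p < ((n + 1) / 2 + N - 1 + 1) / 2 := by
  simp only [Qmat, Fin.isValue, ite_eq_right_iff, one_ne_zero, imp_false] at hp
  have := p.1.isLt; have := p.2.isLt
  unfold zeroRank
  split_ifs <;> omega

end

theorem stmt7 (n N : ℕ) (hN : 5 * n / 2 - 1 ≤ N) :
    ∀ (v : Fin 2) (L : List (Fin n × Fin N)),
      IsStaircase (Qmat n N) v L → L.length ≤ ((n + 1) / 2 + N - 1 + 1) / 2 := by
  intro v L hL
  fin_cases v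
  · exact hL.length_le_of_lt (zeroRank n N) (fun _ _ => zeroRank_lt_zeroRank hN)
      fun _ => zeroRank_lt
  · exact hL.length_le_of_lt (oneRank n N) (fun _ _ => oneRank_lt_oneRank hN)
      fun _ => oneRank_lt hN
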